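/- arXiv:1811.07967 — 6 statements merged into one kernel-verified Lean document; each statement's English description precedes it below -/
import Mathlib

section
/- Let m ≥ 2 be real, and let K : (0,∞) → ℝ and H : (0,∞) × (0,∞) → ℝ be functions such that (i) K(y) = y^{−m/2−1} K(1/y) for all y > 0, and (ii) H(y₁,y₂) = (■⁺K)(y₁,y₂) + (σ_{−m/2−2}(■⁺K))(y₁,y₂) − (σ_{−m/2−2}(σ_{−m/2−2}(■⁺K)))(y₁,y₂) for all y₁, y₂ > 0 with y₁ ≠ 1, y₂ ≠ 1, y₁y₂ ≠ 1. Define K̃(x) = ((e^x − 1)/x)² · K(e^x) for x ≠ 0, and define, for x₁, x₂, x₁+x₂ all nonzero, H̃(x₁,x₂) = ((e^{x₁}−1)/x₁)·((e^{x₁+x₂}−e^{x₁})/x₂)·((e^{x₁+x₂}−1)/(x₁+x₂))·H(e^{x₁}, e^{x₂}) + 2·E₂(x₁,x₂)·((e^{x₁+x₂}−1)/(x₁+x₂))·K(e^{x₁+x₂}). Then for all x₁, x₂ ∈ ℝ with x₁ ≠ 0, x₂ ≠ 0 and x₁+x₂ ≠ 0: H̃(x₁,x₂) = (▲⁺K̃)(x₁,x₂)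 + (τ_{−m/2+1}(▲⁺K̃))(x₁,x₂) − (τ_{−m/2+1}(τ_{−m/2+1}(▲⁺K̃)))(x₁,x₂). -/
/-- Cyclic operator `σ_j` on one-variable functions. -/
noncomputable def sigma1 (j : ℝ) (f : ℝ → ℝ) (y : ℝ) : ℝ := y ^ j * f (1 / y)

/-- Cyclic operator `σ_j` on two-variable functions. -/
noncomputable def sigma2 (j : ℝ) (F : ℝ → ℝ → ℝ) (y₁ y₂ : ℝ) : ℝ :=
  (y₁ * y₂) ^ j * F (1 / (y₁ * y₂)) y₁

/-- The operator `■⁺` on one-variable functions. -/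
noncomputable def sqPlus (f : ℝ → ℝ) (y₁ y₂ : ℝ) : ℝ :=
  (f (y₁ * y₂) - f y₁) / (y₁ * y₂ - y₁)
/-- Cyclic operator `τ_j` on one-variable functions. -/
noncomputable def tau1 (j : ℝ) (f : ℝ → ℝ) (x : ℝ) : ℝ := Real.exp (j * x) * f (-x)

/-- Cyclic operator `τ_j` on two-variable functions. -/
noncomputable def tau2 (j : ℝ) (F : ℝ → ℝ → ℝ) (x₁ x₂ : ℝ) : ℝ :=
  Real.exp (j * (x₁ + x₂)) * F (-x₁ - x₂) x₁

/-- The operator `▲⁺` on one-variable functions. -/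
noncomputable def triPlus (f : ℝ → ℝ) (x₁ x₂ : ℝ) : ℝ := (f (x₁ + x₂) - f x₁) / x₂
/-- Second divided difference of the exponential at `0, x₁, x₁ + x₂`. -/
noncomputable def E2 (x₁ x₂ : ℝ) : ℝ :=
  1 / (x₁ * (x₁ + x₂)) - Real.exp x₁ / (x₁ * x₂)
    + Real.exp (x₁ + x₂) / (x₂ * (x₁ + x₂))

set_option maxHeartbeats 4000000

/-- Transfer of the Connes–Moscovici functional relation under the change of
coordinates `k → h = log k`. -/
theorem stmt1 (m : ℝ) (hm : 2 ≤ m) (K : ℝ → ℝ) (H : ℝ → ℝ → ℝ)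
    (hK : ∀ y : ℝ, 0 < y → K y = y ^ (-m / 2 - 1) * K (1 / y))
    (hH : ∀ y₁ y₂ : ℝ, 0 < y₁ → 0 < y₂ → y₁ ≠ 1 → y₂ ≠ 1 → y₁ * y₂ ≠ 1 →
      H y₁ y₂ = sqPlus K y₁ y₂ + sigma2 (-m / 2 - 2) (sqPlus K) y₁ y₂
        - sigma2 (-m / 2 - 2) (sigma2 (-m / 2 - 2) (sqPlus K)) y₁ y₂)
    (Kt : ℝ → ℝ)
    (hKt : ∀ x : ℝ, x ≠ 0 → Kt x = ((Real.exp x - 1) / x) ^ 2 * K (Real.exp x))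
    (Ht : ℝ → ℝ → ℝ)
    (hHt : ∀ x₁ x₂ : ℝ, x₁ ≠ 0 → x₂ ≠ 0 → x₁ + x₂ ≠ 0 →
      Ht x₁ x₂ =
        ((Real.exp x₁ - 1) / x₁) * ((Real.exp (x₁ + x₂) - Real.exp x₁) / x₂) *
            ((Real.exp (x₁ + x₂) - 1) / (x₁ + x₂)) * H (Real.exp x₁) (Real.exp x₂)
          + 2 * E2 x₁ x₂ * ((Real.exp (x₁ + x₂) - 1) / (x₁ + x₂)) *
            K (Real.exp (x₁ + x₂)))
    (x₁ x₂ : ℝ) (h1 : x₁ ≠ 0) (h2 : x₂ ≠ 0) (h12 : x₁ + x₂ ≠ 0) :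
    Ht x₁ x₂ =
      triPlus Kt x₁ x₂ + tau2 (-m / 2 + 1) (triPlus Kt) x₁ x₂
        - tau2 (-m / 2 + 1) (tau2 (-m / 2 + 1) (triPlus Kt)) x₁ x₂ := by
  have ha : (0:ℝ) < Real.exp x₁ := Real.exp_pos _
  have hb : (0:ℝ) < Real.exp x₂ := Real.exp_pos _
  set a := Real.exp x₁ with hadef
  set b := Real.exp x₂ with hbdef
  have ha0 : a ≠ 0 := ha.ne'
  have hb0 : b ≠ 0 := hb.ne'
  have hab : Real.exp (x₁ + x₂) = a * b := Real.exp_add _ _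
  have hab0 : (0:ℝ) < a * b := mul_pos ha hb
  have ha1 : a ≠ 1 := by
    rw [hadef, Ne, Real.exp_eq_one_iff]; exact h1
  have hb1 : b ≠ 1 := by
    rw [hbdef, Ne, Real.exp_eq_one_iff]; exact h2
  have hab1 : a * b ≠ 1 := by
    rw [← hab, Ne, Real.exp_eq_one_iff]; exact h12
  -- functional equation in the convenient direction
  have hK' : ∀ y : ℝ, 0 < y → K y⁻¹ = y ^ (m / 2 + 1) * K y := by
    intro y hy
    rw [hK y hy, ← one_div, ← mul_assoc, ← Real.rpow_add hy,
      show m / 2 + 1 + (-m / 2 - 1) = 0 by ring, Real.rpow_zero, one_mul]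
  -- abbreviations for half-power values
  set u := a ^ (m / 2) with hu
  set v := b ^ (m / 2) with hv
  have hu0 : u ≠ 0 := (Real.rpow_pos_of_pos ha _).ne'
  have hv0 : v ≠ 0 := (Real.rpow_pos_of_pos hb _).ne'
  -- rpow computations
  have sq2 : ∀ y : ℝ, y ^ (2:ℝ) = y ^ (2:ℕ) := fun y => by
    rw [← Real.rpow_natCast y 2]; norm_num
  have P1 : (a * b) ^ (-m / 2 - 2) = (u * v * (a * b) ^ (2:ℕ))⁻¹ := by
    rw [show -m / 2 - 2 = -(m / 2 + 2) by ring, Real.rpow_neg hab0.le,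
      Real.rpow_add hab0, Real.mul_rpow ha.le hb.le, sq2, ← hu, ← hv]
  have P2 : (b⁻¹) ^ (-m / 2 - 2) = v * b ^ (2:ℕ) := by
    rw [Real.inv_rpow hb.le, show -m / 2 - 2 = -(m / 2 + 2) by ring,
      Real.rpow_neg hb.le, inv_inv, Real.rpow_add hb, sq2, ← hv]
  have P3 : a ^ (m / 2 + 1) = u * a := by
    rw [Real.rpow_add ha, Real.rpow_one]
  have P4 : b ^ (m / 2 + 1) = v * b := by
    rw [Real.rpow_add hb, Real.rpow_one]
  have P5 : (a * b) ^ (m / 2 + 1) = u * v * (a * b) := by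
    rw [Real.rpow_add hab0, Real.rpow_one, Real.mul_rpow ha.le hb.le]
  have P6 : (a * b) ^ (-m / 2 + 1) = (a * b) * (u * v)⁻¹ := by
    rw [show -m / 2 + 1 = 1 + -(m/2) by ring, Real.rpow_add hab0, Real.rpow_one,
      Real.rpow_neg hab0.le, Real.mul_rpow ha.le hb.le]
  have P7 : a ^ (-m / 2 + 1) = a * u⁻¹ := by
    rw [show -m / 2 + 1 = 1 + -(m/2) by ring, Real.rpow_add ha, Real.rpow_one,
      Real.rpow_neg ha.le]
  -- exponential factors from τ
  have T1 : Real.exp ((-m / 2 + 1) * (x₁ + x₂)) = (a * b) ^ (-m / 2 + 1) := by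
    rw [mul_comm, Real.exp_mul, hab]
  have T2 : Real.exp ((-m / 2 + 1) * -x₂) = (b ^ (-m / 2 + 1))⁻¹ := by
    rw [mul_neg, Real.exp_neg, mul_comm, Real.exp_mul]
  have P8 : b ^ (-m / 2 + 1) = b * v⁻¹ := by
    rw [show -m / 2 + 1 = 1 + -(m/2) by ring, Real.rpow_add hb, Real.rpow_one,
      Real.rpow_neg hb.le]
  -- nonzero denominators
  have d1 : a * b - a ≠ 0 := by
    refine sub_ne_zero.mpr fun h => ?_
    rcases mul_right_eq_self₀.mp h with h' | h'
    · exact hb1 h'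
    · exact ha0 h'
  have d2 : b⁻¹ - (a * b)⁻¹ ≠ 0 := by
    rw [sub_ne_zero]
    intro h; apply ha1
    have := congrArg (fun t : ℝ => t⁻¹) h
    simp at this
    field_simp at this; linarith [this]
  have d3 : a⁻¹ - b ≠ 0 := by
    rw [sub_ne_zero]
    intro h; apply hab1
    rw [← h]; field_simp
  -- rewrite the statement
  rw [hHt x₁ x₂ h1 h2 h12, hH a b ha hb ha1 hb1 hab1]
  simp only [sqPlus, sigma2, tau2, triPlus, E2, one_div]
  rw [show -x₁ - x₂ + x₁ = -x₂ by ring, show -(-x₁ - x₂) - x₁ = x₂ by ring,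
    show x₂ + (-x₁ - x₂) = -x₁ by ring, show -x₁ - x₂ = -(x₁ + x₂) by ring]
  rw [hKt (x₁ + x₂) h12, hKt x₁ h1, hKt x₂ h2, hKt (-x₂) (neg_ne_zero.mpr h2),
    hKt (-x₁) (neg_ne_zero.mpr h1), hKt (-(x₁ + x₂)) (neg_ne_zero.mpr h12)]
  simp only [Real.exp_neg, hab]
  rw [show (a * b)⁻¹ * a = b⁻¹ by field_simp]
  simp only [inv_inv]
  rw [show b * (a * b)⁻¹ = a⁻¹ by field_simp [mul_comm]]
  rw [hK' a ha, hK' b hb, hK' (a * b) hab0]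
  rw [P1, P2, P3, P4, P5, T1, T2, P6, P8]
  simp only [hab, ← hadef, ← hbdef]
  rw [show b⁻¹ - (a * b)⁻¹ = (a - 1) / (a * b) by field_simp <;> ring,
    show a⁻¹ - b = (1 - a * b) / a by field_simp <;> ring]
  simp only [show a * b - a = a * (b - 1) by ring]
  simp only [div_neg, neg_neg, neg_sq]
  rw [show ((a * b)⁻¹ - 1) / (x₁ + x₂) = (1 - a * b) / (a * b * (x₁ + x₂)) by
        field_simp <;> ring,
    show (b⁻¹ - 1) / x₂ = (1 - b) / (b * x₂) by field_simp <;> ring,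
    show (a⁻¹ - 1) / x₁ = (1 - a) / (a * x₁) by field_simp <;> ring]
  have e1' : 1 - a ≠ 0 := sub_ne_zero.mpr (Ne.symm ha1)
  have e2' : 1 - b ≠ 0 := sub_ne_zero.mpr (Ne.symm hb1)
  have e1 : a - 1 ≠ 0 := sub_ne_zero.mpr ha1
  have e2 : b - 1 ≠ 0 := sub_ne_zero.mpr hb1
  have e3 : 1 - a * b ≠ 0 := sub_ne_zero.mpr (Ne.symm hab1)
  clear_value a b u v
  clear hK hH hKt hHt hK' hadef hbdef hu hv hab T1 T2 P1 P2 P3 P4 P5 P6 P7 P8 sq2 hm ha1 d1 d2 d3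
  generalize K (a * b) = k3
  generalize K a = k1
  generalize K b = k2
  field_simp
  ring
end

section
/- Fix j ∈ ℝ and let G : ℝ → ℝ be defined by G(x) = (e^{jx} − 1)/x for x ≠ 0 and G(0) = j. Then (i) (τ_j G)(x) = G(x) for every x ∈ ℝ, and (ii) (τ_j(▲⁺G))(x₁,x₂) = (▲⁺G)(x₁,x₂) for all x₁, x₂ ∈ ℝ with x₁ ≠ 0 and x₂ ≠ 0. -/
/-- Invariance of `G^{(1)}_{exp}(x;j) = (e^{jx}−1)/x` under `τ_j`, and of `▲⁺G` under `τ_j`. -/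
theorem stmt6 (j : ℝ) (G : ℝ → ℝ) (hG0 : G 0 = j)
    (hG : ∀ x : ℝ, x ≠ 0 → G x = (Real.exp (j * x) - 1) / x) :
    (∀ x : ℝ, tau1 j G x = G x) ∧
    (∀ x₁ x₂ : ℝ, x₁ ≠ 0 → x₂ ≠ 0 →
      tau2 j (triPlus G) x₁ x₂ = triPlus G x₁ x₂) := by
  constructor
  · intro x
    rcases eq_or_ne x 0 with rfl | hx
    · simp [tau1, hG0]
    · rw [tau1, hG x hx, hG (-x) (neg_ne_zero.mpr hx)]
      rw [show j * -x = -(j*x) by ring, Real.exp_neg]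
      have := Real.exp_ne_zero (j * x)
      field_simp
      ring
  · intro x₁ x₂ h1 h2
    rcases eq_or_ne (x₁ + x₂) 0 with hs | hs
    · have hx2 : x₂ = -x₁ := by linarith
      subst hx2
      simp only [tau2, triPlus, hG0]
      rw [show x₁ + -x₁ = (0:ℝ) by ring, show -x₁ - -x₁ + x₁ = x₁ by ring,
        show -x₁ - -x₁ = (0:ℝ) by ring, hG0]
      simp only [mul_zero, Real.exp_zero, one_mul]
      field_simp
      ring
    · simp only [tau2, triPlus]
      rw [show -x₁ - x₂ + x₁ = -x₂ by ring]
      rw [hG (-x₂) (neg_ne_zero.mpr h2), hG (-x₁ - x₂) (by intro h; apply hs; linarith),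
        hG (x₁ + x₂) hs, hG x₁ h1]
      rw [show j * -x₂ = -(j*x₂) by ring, show j * (-x₁ - x₂) = -(j*(x₁+x₂)) by ring,
        Real.exp_neg, Real.exp_neg, show -x₁ - x₂ = -(x₁+x₂) by ring, show j * (x₁ + x₂) = j*x₁ + j*x₂ by ring, Real.exp_add]
      have t1 := Real.exp_ne_zero (j * x₁)
      have t2 := Real.exp_ne_zero (j * x₂)
      simp only [div_neg]
      field_simp
      ring
end

section
/- Fix j ∈ ℝ and let G : (0,∞) → ℝ be defined by G(y) = (y^j − 1)/(y − 1) for y ≠ 1 and G(1) = j. Then (i) (σ_{j−1} G)(y) = G(y) for every y > 0, and (ii) (σ_{j−2}(■⁺G))(y₁,y₂) = (■⁺G)(y₁,y₂) for all y₁, y₂ > 0 with y₁ ≠ 1 and y₂ ≠ 1. -/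
private lemma frac_aux (a b : ℝ) (ha : a ≠ 0) (hb : b ≠ 0) (hb1 : b ≠ 1) :
    (1 / a - 1) / (1 / b - 1) = b * (a - 1) / (a * (b - 1)) := by
  have hb1' : (1 : ℝ) / b - 1 ≠ 0 := by
    rw [sub_ne_zero]
    simp only [ne_eq, div_eq_one_iff_eq hb]
    exact fun hh => hb1 hh.symm
  rw [div_eq_div_iff hb1' (mul_ne_zero ha (sub_ne_zero.mpr hb1))]
  field_simp
  ring

/-- Invariance of `G^{(1)}_{pow}(y;j) = (y^j−1)/(y−1)` under `σ_{j−1}`, and of `■⁺G` under `σ_{j−2}`. -/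
theorem stmt7 (j : ℝ) (G : ℝ → ℝ) (hG1 : G 1 = j)
    (hG : ∀ y : ℝ, 0 < y → y ≠ 1 → G y = (y ^ j - 1) / (y - 1)) :
    (∀ y : ℝ, 0 < y → sigma1 (j - 1) G y = G y) ∧
    (∀ y₁ y₂ : ℝ, 0 < y₁ → 0 < y₂ → y₁ ≠ 1 → y₂ ≠ 1 →
      sigma2 (j - 2) (sqPlus G) y₁ y₂ = sqPlus G y₁ y₂) := by
  constructor
  · intro y hy
    rcases eq_or_ne y 1 with h | h
    · subst h; simp [sigma1, hG1]
    · have h1y : (1 : ℝ) / y ≠ 1 := by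
        simp only [ne_eq, div_eq_one_iff_eq hy.ne']
        exact fun hh => h hh.symm
      have hyj : y ^ j ≠ 0 := (Real.rpow_pos_of_pos hy j).ne'
      have hinv : (1 / y) ^ j = 1 / y ^ j := by
        rw [one_div, Real.inv_rpow hy.le, one_div]
      rw [sigma1, hG _ hy h, hG (1 / y) (by positivity) h1y, hinv,
        Real.rpow_sub hy, Real.rpow_one, frac_aux _ _ hyj hy.ne' h]
      have h1 : y - 1 ≠ 0 := sub_ne_zero.mpr h
      field_simp
  · intro y₁ y₂ h₁ h₂ hn₁ hn₂
    have hp : 0 < y₁ * y₂ := mul_pos h₁ h₂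
    rcases eq_or_ne (y₁ * y₂) 1 with hpe | hpn
    · rw [sigma2, sqPlus, sqPlus, hpe]
      simp only [Real.one_rpow, one_mul, div_one, one_div_one, one_mul, hG1]
      rw [show j - G y₁ = -(G y₁ - j) by ring, show (1 : ℝ) - y₁ = -(y₁ - 1) by ring,
        neg_div_neg_eq]
    · have hA : (0:ℝ) < y₁ ^ j := Real.rpow_pos_of_pos h₁ j
      have hB : (0:ℝ) < y₂ ^ j := Real.rpow_pos_of_pos h₂ j
      have harg : 1 / (y₁ * y₂) * y₁ = 1 / y₂ := by
        field_simp; try ring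
      have h1p : (1 : ℝ) / (y₁ * y₂) ≠ 1 := by
        simp only [ne_eq, div_eq_one_iff_eq hp.ne']
        exact fun hh => hpn hh.symm
      have h1y₂ : (1 : ℝ) / y₂ ≠ 1 := by
        simp only [ne_eq, div_eq_one_iff_eq h₂.ne']
        exact fun hh => hn₂ hh.symm
      rw [sigma2, sqPlus, sqPlus, harg, hG _ hp hpn, hG _ h₁ hn₁,
        hG (1 / y₂) (by positivity) h1y₂, hG (1 / (y₁ * y₂)) (by positivity) h1p,
        Real.rpow_sub hp]
      rw [show (1 / (y₁ * y₂)) ^ j = 1 / (y₁ ^ j * y₂ ^ j) by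
        rw [one_div, Real.inv_rpow hp.le, Real.mul_rpow h₁.le h₂.le, one_div]]
      rw [show (1 / y₂) ^ j = 1 / y₂ ^ j by
        rw [one_div, Real.inv_rpow h₂.le, one_div]]
      rw [Real.mul_rpow h₁.le h₂.le]
      rw [frac_aux _ _ hB.ne' h₂.ne' hn₂,
        frac_aux _ _ (mul_pos hA hB).ne' hp.ne' hpn]
      rw [show (y₁ * y₂) ^ (2:ℝ) = (y₁ * y₂) ^ (2:ℕ) by
        rw [← Real.rpow_natCast]; norm_num]
      rw [show 1 / y₂ - 1 / (y₁ * y₂) = (y₁ - 1) / (y₁ * y₂) by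
        field_simp; try ring]
      have d1 : y₁ - 1 ≠ 0 := sub_ne_zero.mpr hn₁
      have d2 : y₂ - 1 ≠ 0 := sub_ne_zero.mpr hn₂
      have d3 : y₁ * y₂ - 1 ≠ 0 := sub_ne_zero.mpr hpn
      have d7 : y₁ * y₂ - y₁ ≠ 0 := by
        rw [show y₁ * y₂ - y₁ = y₁ * (y₂ - 1) by ring]
        exact mul_ne_zero h₁.ne' d2
      field_simp
      ring
end

section
/- Define f_H(x₁,x₂) = ((e^{x₁} − 1)/x₁) · ((e^{x₁+x₂} − e^{x₁})/x₂) · ((e^{x₁+x₂} − 1)/(x₁+x₂)). Then for all x₁, x₂ ∈ ℝ with x₁ ≠ 0, x₂ ≠ 0 and x₁+x₂ ≠ 0: e^{3x₁} · f_H(x₂, −x₁−x₂) = f_H(x₁,x₂); that is, f_H is invariant under the square of the cyclic operator τ₃, where (τ_j² F)(x₁,x₂) = e^{jx₁} F(x₂, −x₁−x₂). -/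
/-- The function `f_H(x₁,x₂) = exp[0,x₁]·exp[x₁,x₁+x₂]·exp[0,x₁+x₂]`. -/
noncomputable def fH (x₁ x₂ : ℝ) : ℝ :=
  ((Real.exp x₁ - 1) / x₁) * ((Real.exp (x₁ + x₂) - Real.exp x₁) / x₂) *
    ((Real.exp (x₁ + x₂) - 1) / (x₁ + x₂))

/-!
`f_H(x₁,x₂)` is the product of the three divided differences of `exp` on the nodes
`0, x₁, x₁ + x₂`. This product is invariant under cyclic permutation of the nodes, and
translating all nodes by `t` multiplies each divided difference by `eᵗ`. The nodes
`0, x₂, -x₁` of `f_H(x₂, -x₁-x₂)`, translated by `x₁`, are `x₁, x₁ + x₂, 0`: a rotation of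
the original ones.
-/

open Real

namespace Real

theorem slope_exp_add_const (a b t : ℝ) : slope exp (a + t) (b + t) = exp t * slope exp a b := by
  simp only [slope_def_field, exp_add, add_sub_add_right_eq_sub]
  ring

end Real

noncomputable def expSlopeCycle (a b c : ℝ) : ℝ :=
  slope exp a b * slope exp b c * slope exp c a

theorem expSlopeCycle_rotate (a b c : ℝ) : expSlopeCycle a b c = expSlopeCycle b c a := by
  unfold expSlopeCycle
  ring

theorem expSlopeCycle_add_const (a b c t : ℝ) :
    expSlopeCycle (a + t) (b + t) (c + t) = exp (3 * t) * expSlopeCycle a b c := by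
  simp only [expSlopeCycle, slope_exp_add_const, show 3 * t = t + t + t by ring, exp_add]
  ring

theorem fH_eq_expSlopeCycle (x₁ x₂ : ℝ) : fH x₁ x₂ = expSlopeCycle 0 x₁ (x₁ + x₂) := by
  simp only [fH, expSlopeCycle, slope_comm exp (x₁ + x₂) 0, slope_def_field, exp_zero,
    sub_zero, add_sub_cancel_left]

theorem stmt9_general (x₁ x₂ : ℝ) :
    Real.exp (3 * x₁) * fH x₂ (-x₁ - x₂) = fH x₁ x₂ := by
  have translate := expSlopeCycle_add_const 0 x₂ (-x₁) x₁
  rw [zero_add, add_comm x₂, neg_add_cancel] at translate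
  rw [fH_eq_expSlopeCycle, fH_eq_expSlopeCycle, add_sub_cancel, ← translate]
  exact (expSlopeCycle_rotate 0 x₁ (x₁ + x₂)).symm

/-- `f_H` is invariant under the square of the cyclic operator `τ₃`:
`(τ₃² F)(x₁,x₂) = e^{3x₁} F(x₂, −x₁−x₂)`. -/
theorem stmt9 (x₁ x₂ : ℝ) (h1 : x₁ ≠ 0) (h2 : x₂ ≠ 0) (h12 : x₁ + x₂ ≠ 0) :
    Real.exp (3 * x₁) * fH x₂ (-x₁ - x₂) = fH x₁ x₂ :=
  stmt9_general x₁ x₂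
end

section
/- Let m ∈ ℝ and let K : (0,∞) → ℝ satisfy K(y) = y^{−m/2−1} K(1/y) for all y > 0. Define, for x₁, x₂, x₁+x₂ all nonzero, Q^I(x₁,x₂) = E₂(x₁,x₂) · ((e^{x₁+x₂} − 1)/(x₁+x₂)) · K(e^{x₁+x₂}) and Q^{II}(x₁,x₂) = ((e^{x₁} − 1)/x₁) · E₂(x₁,x₂) · K(e^{x₁}). Then for all such x₁, x₂: Q^{II}(x₁,x₂) = e^{(−m/2+1)x₁} · Q^I(x₂, −x₁−x₂). -/
/-- `Q^{II} = τ²_{−m/2+1}(Q^{I})` given the `σ_{−m/2−1}`-invariance of `K`. -/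
theorem stmt10 (m : ℝ) (K : ℝ → ℝ)
    (hK : ∀ y : ℝ, 0 < y → K y = y ^ (-m / 2 - 1) * K (1 / y))
    (QI QII : ℝ → ℝ → ℝ)
    (hQI : ∀ x₁ x₂ : ℝ, x₁ ≠ 0 → x₂ ≠ 0 → x₁ + x₂ ≠ 0 →
      QI x₁ x₂ = E2 x₁ x₂ * ((Real.exp (x₁ + x₂) - 1) / (x₁ + x₂)) *
        K (Real.exp (x₁ + x₂)))
    (hQII : ∀ x₁ x₂ : ℝ, x₁ ≠ 0 → x₂ ≠ 0 → x₁ + x₂ ≠ 0 →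
      QII x₁ x₂ = ((Real.exp x₁ - 1) / x₁) * E2 x₁ x₂ * K (Real.exp x₁))
    (x₁ x₂ : ℝ) (h1 : x₁ ≠ 0) (h2 : x₂ ≠ 0) (h12 : x₁ + x₂ ≠ 0) :
    QII x₁ x₂ = Real.exp ((-m / 2 + 1) * x₁) * QI x₂ (-x₁ - x₂) := by
  have ha : x₂ + (-x₁ - x₂) ≠ 0 := by intro h; apply h1; linarith [h]
  have hb : -x₁ - x₂ ≠ 0 := by intro h; apply h12; linarith [h]
  rw [hQII x₁ x₂ h1 h2 h12, hQI x₂ (-x₁ - x₂) h2 hb ha]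
  have hKs : K (Real.exp x₁) =
      Real.exp (x₁ * (-m / 2 - 1)) * K (Real.exp (x₂ + (-x₁ - x₂))) := by
    rw [hK (Real.exp x₁) (Real.exp_pos _), Real.rpow_def_of_pos (Real.exp_pos _),
      Real.log_exp, one_div, ← Real.exp_neg]
    ring_nf
  rw [hKs]
  have he : Real.exp (x₂ + (-x₁ - x₂)) = Real.exp (-x₁) := by ring_nf
  simp only [E2, he]
  rw [show x₂ + (-x₁ - x₂) = -x₁ by ring]
  have e1 : Real.exp (-x₁) = (Real.exp x₁)⁻¹ := Real.exp_neg x₁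
  have e2 : Real.exp (x₁ + x₂) = Real.exp x₁ * Real.exp x₂ := Real.exp_add _ _
  have e3 : Real.exp ((-m / 2 + 1) * x₁) =
      Real.exp (x₁ * (-m / 2 - 1)) * Real.exp x₁ * Real.exp x₁ := by
    rw [← Real.exp_add, ← Real.exp_add]; ring_nf
  have hE : Real.exp x₁ ≠ 0 := Real.exp_ne_zero _
  rw [e1, e2, e3]
  field_simp
  ring
end

section
/- For every positive integer a, every real m ≥ 2, and all real z₁, z₂ < 1 with z₁ ≠ z₂: H_{a,1,1}(z₁,z₂;m) = (z₁·H_{a+1,1}(z₁;m) − z₂·H_{a+1,1}(z₂;m))/(z₁ − z₂); that is, H_{a,1,1} is the first divided difference of the function z ↦ z·H_{a+1,1}(z;m) at z₁, z₂. -/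
/-!
Put `s = a + m/2`. Substituting `r = t + u` in the double integral defining `H_{a,1,1}` makes the
second factor affine in `t`; after exchanging the order of integration over the triangle
`0 ≤ t ≤ r ≤ 1`, the `t`-integral is elementary and gives
`(K(z₁) - K(z₂)) / ((s - 1)(z₁ - z₂))` with `K(z) = ∫₀¹ (1-r)^(a-1) (1-zr)^(1-s) dr`.
Integrating `(1-r)^a (1-zr)^(1-s)` by parts gives `a K(z) = (s - 1) z J(z) + 1`, where
`J(z) = ∫₀¹ (1-r)^a (1-zr)^(-s) dr` is the integral in `H_{a+1,1}(z)`; the constant `1` cancels in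
the difference.
-/

open MeasureTheory Set Function

/-- One-variable hypergeometric family `H_{a,b}(z;m)` from the rearrangement lemma. -/
noncomputable def Hab (a b : ℕ) (m z : ℝ) : ℝ :=
  (Real.Gamma ((a : ℝ) + b + m / 2 - 2) / (Real.Gamma a * Real.Gamma b)) *
    ∫ t in (0:ℝ)..1, (1 - t) ^ (a - 1) * t ^ (b - 1) *
      (1 - z * t) ^ (-((a : ℝ) + b + m / 2 - 2))
/-- Two-variable hypergeometric family `H_{a,b,c}(z₁,z₂;m)` from the rearrangement lemma. -/
noncomputable def Habc (a b c : ℕ) (m z₁ z₂ : ℝ) : ℝ :=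
  (Real.Gamma ((a : ℝ) + b + c + m / 2 - 2) /
      (Real.Gamma a * Real.Gamma b * Real.Gamma c)) *
    ∫ t in (0:ℝ)..1, ∫ u in (0:ℝ)..(1 - t),
      (1 - t - u) ^ (a - 1) * t ^ (b - 1) * u ^ (c - 1) *
        (1 - z₁ * t - z₂ * u) ^ (-((a : ℝ) + b + c + m / 2 - 2))

lemma one_sub_mul_pos {z t : ℝ} (hz : z < 1) (ht₀ : 0 ≤ t) (ht₁ : t ≤ 1) : 0 < 1 - z * t := by
  nlinarith [mul_nonneg (sub_pos.2 hz).le ht₀]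

lemma one_sub_mul_sub_mul_pos {z₁ z₂ t u : ℝ} (hz₁ : z₁ < 1) (hz₂ : z₂ < 1) (ht : 0 ≤ t)
    (hu : 0 ≤ u) (htu : t + u ≤ 1) : 0 < 1 - z₁ * t - z₂ * u := by
  rcases ht.eq_or_lt with rfl | ht
  · simpa using one_sub_mul_pos hz₂ hu (by linarith)
  · nlinarith [mul_pos (sub_pos.2 hz₁) ht, mul_nonneg (sub_pos.2 hz₂).le hu]

lemma integral_sub_mul_rpow {C e s r : ℝ} (hs : s ≠ 1) (he : e ≠ 0)
    (hpos : ∀ t ∈ uIcc 0 r, 0 < C - e * t) :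
    ∫ t in (0:ℝ)..r, (C - e * t) ^ (-s) =
      ((C - e * r) ^ (1 - s) - C ^ (1 - s)) / ((s - 1) * e) := by
  have hderiv : ∀ t ∈ uIcc 0 r, HasDerivAt (fun t => (C - e * t) ^ (1 - s) / ((s - 1) * e))
      ((C - e * t) ^ (-s)) t := by
    intro t ht
    have hlin : HasDerivAt (fun t : ℝ => C - e * t) (-e) t := by
      simpa using ((hasDerivAt_id t).const_mul e).const_sub C
    refine ((hlin.rpow_const (p := 1 - s) (Or.inl (hpos t ht).ne')).div_const
      ((s - 1) * e)).congr_deriv ?_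
    rw [show 1 - s - 1 = -s by ring]
    field_simp [sub_ne_zero.2 hs]
    ring
  have hint : IntervalIntegrable (fun t => (C - e * t) ^ (-s)) volume 0 r :=
    (ContinuousOn.rpow_const (by fun_prop) fun t ht => Or.inl (hpos t ht).ne').intervalIntegrable
  rw [intervalIntegral.integral_eq_sub_of_hasDerivAt hderiv hint, mul_zero, sub_zero]
  ring

/-- Euler's integral for `₂F₁(s, 1; n + 2; z) / (n + 1)`. -/
noncomputable def eulerIntegral (n : ℕ) (s z : ℝ) : ℝ :=
  ∫ t in (0:ℝ)..1, (1 - t) ^ n * (1 - z * t) ^ (-s)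

lemma intervalIntegrable_one_sub_pow_mul_rpow (n : ℕ) (s : ℝ) {z : ℝ} (hz : z < 1) :
    IntervalIntegrable (fun t : ℝ => (1 - t) ^ n * (1 - z * t) ^ (-s)) volume 0 1 := by
  refine (ContinuousOn.mul (by fun_prop)
    (ContinuousOn.rpow_const (by fun_prop) ?_)).intervalIntegrable
  intro t ht
  rw [uIcc_of_le zero_le_one] at ht
  exact Or.inl (one_sub_mul_pos hz ht.1 ht.2).ne'

-- Integrate the derivative of `(1 - t)^(n+1) (1 - zt)^(1-s)`, which is `1` at `t = 0` and `0` at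
-- `t = 1`.
lemma succ_mul_eulerIntegral (n : ℕ) (s : ℝ) {z : ℝ} (hz : z < 1) :
    (n + 1) * eulerIntegral n (s - 1) z = (s - 1) * z * eulerIntegral (n + 1) s z + 1 := by
  have hderiv : ∀ t ∈ uIcc (0:ℝ) 1,
      HasDerivAt (fun t => (1 - t) ^ (n + 1) * (1 - z * t) ^ (-(s - 1)))
      ((s - 1) * z * ((1 - t) ^ (n + 1) * (1 - z * t) ^ (-s))
        - (n + 1) * ((1 - t) ^ n * (1 - z * t) ^ (-(s - 1)))) t := by
    intro t ht
    rw [uIcc_of_le zero_le_one] at ht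
    have h₁ : HasDerivAt (fun t : ℝ => 1 - t) (-1) t := by
      simpa using (hasDerivAt_id t).const_sub 1
    have h₂ : HasDerivAt (fun t : ℝ => 1 - z * t) (-z) t := by
      simpa using ((hasDerivAt_id t).const_mul z).const_sub 1
    refine ((h₁.fun_pow (n + 1)).mul
      (h₂.rpow_const (p := -(s - 1)) (Or.inl (one_sub_mul_pos hz ht.1 ht.2).ne'))).congr_deriv ?_
    rw [show -(s - 1) - 1 = -s by ring]
    push_cast
    ring
  have hJ := (intervalIntegrable_one_sub_pow_mul_rpow (n + 1) s hz).const_mul ((s - 1) * z)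
  have hK := (intervalIntegrable_one_sub_pow_mul_rpow n (s - 1) hz).const_mul ((n : ℝ) + 1)
  have hftc := intervalIntegral.integral_eq_sub_of_hasDerivAt hderiv (hJ.sub hK)
  rw [intervalIntegral.integral_sub hJ hK, intervalIntegral.integral_const_mul,
    intervalIntegral.integral_const_mul] at hftc
  simp only [eulerIntegral]
  norm_num at hftc ⊢
  linarith

lemma integral_integral_swap_triangle {F : ℝ → ℝ → ℝ}
    (hF : ContinuousOn (uncurry F) {p : ℝ × ℝ | 0 ≤ p.1 ∧ p.1 ≤ p.2 ∧ p.2 ≤ 1}) :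
    ∫ t in (0:ℝ)..1, ∫ r in t..1, F t r = ∫ r in (0:ℝ)..1, ∫ t in (0:ℝ)..r, F t r := by
  set T := {p : ℝ × ℝ | 0 ≤ p.1 ∧ p.1 ≤ p.2 ∧ p.2 ≤ 1}
  set S := {p : ℝ × ℝ | p.1 < p.2}
  set μ := volume.restrict (Ioc (0:ℝ) 1)
  have hS : MeasurableSet S := measurableSet_lt measurable_fst measurable_snd
  have hsq : MeasurableSet (Ioc (0:ℝ) 1 ×ˢ Ioc (0:ℝ) 1) := measurableSet_Ioc.prod measurableSet_Ioc
  have hST : S ∩ Ioc 0 1 ×ˢ Ioc 0 1 ⊆ T := fun p hp =>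
    ⟨hp.2.1.1.le, hp.1.le, hp.2.2.2⟩
  have hT : IsCompact T := by
    refine (isCompact_Icc.prod isCompact_Icc).of_isClosed_subset ?_ fun p hp =>
      ⟨⟨hp.1, hp.2.1.trans hp.2.2⟩, hp.1.trans hp.2.1, hp.2.2⟩
    exact (isClosed_le continuous_const continuous_fst).inter
      ((isClosed_le continuous_fst continuous_snd).inter
        (isClosed_le continuous_snd continuous_const))
  obtain ⟨C, hC⟩ := hT.exists_bound_of_continuousOn hF
  have hC₀ : 0 ≤ C := (norm_nonneg _).trans (hC (0, 0) ⟨le_rfl, le_rfl, zero_le_one⟩)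
  have hint : Integrable (S.indicator (uncurry F)) (μ.prod μ) := by
    refine Integrable.of_bound ?_ C ?_ <;> rw [Measure.prod_restrict]
    · rw [aestronglyMeasurable_indicator_iff hS, Measure.restrict_restrict hS]
      exact (hF.mono hST).aestronglyMeasurable (hS.inter hsq)
    · filter_upwards [ae_restrict_mem hsq] with p hp
      by_cases hpS : p ∈ S
      · simpa [hpS] using hC p (hST ⟨hpS, hp⟩)
      · simpa [hpS] using hC₀
  have hL : ∀ t ∈ Ioc (0:ℝ) 1, ∫ r, S.indicator (uncurry F) (t, r) ∂μ = ∫ r in t..1, F t r := by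
    intro t ht
    have : (fun r => S.indicator (uncurry F) (t, r)) = (Ioi t).indicator (F t) := by
      ext r; simp [S, indicator_apply]
    rw [this, setIntegral_indicator measurableSet_Ioi, Ioc_inter_Ioi, max_eq_right ht.1.le,
      intervalIntegral.integral_of_le ht.2]
  have hR : ∀ r ∈ Ioc (0:ℝ) 1, ∫ t, S.indicator (uncurry F) (t, r) ∂μ = ∫ t in 0..r, F t r := by
    intro r hr
    have : (fun t => S.indicator (uncurry F) (t, r)) = (Iio r).indicator (F · r) := by
      ext t; simp [S, indicator_apply]
    have hIoo : Ioc 0 1 ∩ Iio r = Ioo 0 r := by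
      ext t; simp only [mem_inter_iff, mem_Ioc, mem_Iio, mem_Ioo]; grind
    rw [this, setIntegral_indicator measurableSet_Iio, hIoo,
      intervalIntegral.integral_of_le hr.1.le, integral_Ioc_eq_integral_Ioo]
  rw [intervalIntegral.integral_of_le zero_le_one, intervalIntegral.integral_of_le zero_le_one,
    ← setIntegral_congr_fun measurableSet_Ioc hL, ← setIntegral_congr_fun measurableSet_Ioc hR]
  exact integral_integral_swap (f := fun t r => S.indicator (uncurry F) (t, r)) hint

lemma integral_simplex_eq_sub_eulerIntegral (n : ℕ) {s z₁ z₂ : ℝ} (hs : s ≠ 1) (hz₁ : z₁ < 1)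
    (hz₂ : z₂ < 1) (hne : z₁ ≠ z₂) :
    ∫ t in (0:ℝ)..1, ∫ u in (0:ℝ)..(1 - t), (1 - t - u) ^ n * (1 - z₁ * t - z₂ * u) ^ (-s) =
      (eulerIntegral n (s - 1) z₁ - eulerIntegral n (s - 1) z₂) / ((s - 1) * (z₁ - z₂)) := by
  set F : ℝ → ℝ → ℝ := fun t r => (1 - r) ^ n * (1 - z₂ * r - (z₁ - z₂) * t) ^ (-s)
  have hpos : ∀ t r : ℝ, 0 ≤ t → t ≤ r → r ≤ 1 → 0 < 1 - z₂ * r - (z₁ - z₂) * t := by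
    intro t r ht htr hr
    rw [show 1 - z₂ * r - (z₁ - z₂) * t = 1 - z₁ * t - z₂ * (r - t) by ring]
    exact one_sub_mul_sub_mul_pos hz₁ hz₂ ht (by linarith) (by linarith)
  have hshift : ∀ t : ℝ, ∫ u in (0:ℝ)..(1 - t), (1 - t - u) ^ n * (1 - z₁ * t - z₂ * u) ^ (-s) =
      ∫ r in t..1, F t r := by
    intro t
    have h := intervalIntegral.integral_comp_add_left (F t) t (a := 0) (b := 1 - t)
    rw [add_zero, add_sub_cancel] at h
    rw [← h]
    congr 1
    ext u
    simp only [F]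
    rw [show 1 - t - u = 1 - (t + u) by ring,
      show 1 - z₁ * t - z₂ * u = 1 - z₂ * (t + u) - (z₁ - z₂) * t by ring]
  have hcont : ContinuousOn (uncurry F) {p : ℝ × ℝ | 0 ≤ p.1 ∧ p.1 ≤ p.2 ∧ p.2 ≤ 1} :=
    ContinuousOn.mul (by fun_prop) (ContinuousOn.rpow_const (by fun_prop)
      fun p hp => Or.inl (hpos _ _ hp.1 hp.2.1 hp.2.2).ne')
  have hinner : ∀ r ∈ uIcc (0:ℝ) 1, ∫ t in (0:ℝ)..r, F t r =
      ((1 - r) ^ n * (1 - z₁ * r) ^ (-(s - 1)) - (1 - r) ^ n * (1 - z₂ * r) ^ (-(s - 1))) /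
        ((s - 1) * (z₁ - z₂)) := by
    intro r hr
    rw [uIcc_of_le zero_le_one] at hr
    have hpos' : ∀ t ∈ uIcc 0 r, 0 < 1 - z₂ * r - (z₁ - z₂) * t := by
      intro t ht
      rw [uIcc_of_le hr.1] at ht
      exact hpos t r ht.1 ht.2 hr.2
    rw [intervalIntegral.integral_const_mul, integral_sub_mul_rpow hs (sub_ne_zero.2 hne) hpos',
      show 1 - z₂ * r - (z₁ - z₂) * r = 1 - z₁ * r by ring, neg_sub, mul_div_assoc', mul_sub]
  calc ∫ t in (0:ℝ)..1, ∫ u in (0:ℝ)..(1 - t), (1 - t - u) ^ n * (1 - z₁ * t - z₂ * u) ^ (-s)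
      = ∫ t in (0:ℝ)..1, ∫ r in t..1, F t r := by simp_rw [hshift]
    _ = ∫ r in (0:ℝ)..1, ∫ t in (0:ℝ)..r, F t r := integral_integral_swap_triangle hcont
    _ = _ := intervalIntegral.integral_congr hinner
    _ = _ := by
      rw [intervalIntegral.integral_div, intervalIntegral.integral_sub
        (intervalIntegrable_one_sub_pow_mul_rpow n _ hz₁)
        (intervalIntegrable_one_sub_pow_mul_rpow n _ hz₂)]
      rfl

lemma integral_simplex_eq_divided_difference {a : ℕ} (ha : 0 < a) {s z₁ z₂ : ℝ} (hs : s ≠ 1)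
    (hz₁ : z₁ < 1) (hz₂ : z₂ < 1) (hne : z₁ ≠ z₂) :
    ∫ t in (0:ℝ)..1, ∫ u in (0:ℝ)..(1 - t), (1 - t - u) ^ (a - 1) * (1 - z₁ * t - z₂ * u) ^ (-s) =
      (z₁ * eulerIntegral a s z₁ - z₂ * eulerIntegral a s z₂) / (a * (z₁ - z₂)) := by
  obtain ⟨n, rfl⟩ : ∃ n, a = n + 1 := ⟨a - 1, by omega⟩
  have h₁ := succ_mul_eulerIntegral n s hz₁
  have h₂ := succ_mul_eulerIntegral n s hz₂
  rw [Nat.add_sub_cancel, integral_simplex_eq_sub_eulerIntegral n hs hz₁ hz₂ hne,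
    div_eq_div_iff (mul_ne_zero (sub_ne_zero.2 hs) (sub_ne_zero.2 hne))
      (mul_ne_zero (by positivity) (sub_ne_zero.2 hne))]
  push_cast
  linear_combination (z₁ - z₂) * (h₁ - h₂)

lemma Hab_succ_one (a : ℕ) (m z : ℝ) :
    Hab (a + 1) 1 m z =
      Real.Gamma (a + m / 2) / Real.Gamma (a + 1) * eulerIntegral a (a + m / 2) z := by
  rw [Hab, eulerIntegral,
    show ((a + 1 : ℕ) : ℝ) + (1 : ℕ) + m / 2 - 2 = a + m / 2 by push_cast; ring]
  simp

lemma Habc_one_one (a : ℕ) (m z₁ z₂ : ℝ) :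
    Habc a 1 1 m z₁ z₂ = Real.Gamma (a + m / 2) / Real.Gamma a *
      ∫ t in (0:ℝ)..1, ∫ u in (0:ℝ)..(1 - t),
        (1 - t - u) ^ (a - 1) * (1 - z₁ * t - z₂ * u) ^ (-((a : ℝ) + m / 2)) := by
  rw [Habc, show (a : ℝ) + (1 : ℕ) + (1 : ℕ) + m / 2 - 2 = a + m / 2 by push_cast; ring]
  simp

/-- `H_{a,1,1}` is the first divided difference of `z ↦ z·H_{a+1,1}(z;m)`. -/
theorem stmt11 (a : ℕ) (ha : 0 < a) (m : ℝ) (hm : 2 ≤ m)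
    (z₁ z₂ : ℝ) (hz₁ : z₁ < 1) (hz₂ : z₂ < 1) (hne : z₁ ≠ z₂) :
    Habc a 1 1 m z₁ z₂ =
      (z₁ * Hab (a + 1) 1 m z₁ - z₂ * Hab (a + 1) 1 m z₂) / (z₁ - z₂) := by
  have ha₁ : (1 : ℝ) ≤ a := by exact_mod_cast ha
  have hΓ : Real.Gamma a ≠ 0 := (Real.Gamma_pos_of_pos (by positivity)).ne'
  rw [Habc_one_one, Hab_succ_one, Hab_succ_one,
    integral_simplex_eq_divided_difference ha (by linarith) hz₁ hz₂ hne,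
    Real.Gamma_add_one (by positivity)]
  field_simp [sub_ne_zero.2 hne]
end
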